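/- Let f = g ∘ h where g : ℝ → ℝ is continuously differentiable and h : ℝ^p → ℝ is differentiable and positively homogeneous of degree α > 0 (i.e., h(tθ) = t^α h(θ) for all t > 0). Fix θ with h(θ) ≠ 0. Then ∫₀¹ ∇(g∘h)(tθ) dt = ((g(h(θ)) − g(0)) / (α h(θ))) · ∇h(θ). -/

import Mathlib

/-!
For `t > 0` the chain rule and the `(α - 1)`-homogeneity of `∇h` give
`∇(g ∘ h)(t • θ) = g'(t ^ α * h θ) * t ^ (α - 1) • ∇h(θ)`, so the integral is a multiple of `∇h(θ)`
whose coefficient is `(α * h θ)⁻¹ * ∫₀¹ d/dt g(t ^ α * h θ) dt = (g (h θ) - g 0) / (α * h θ)`.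
The coefficient is integrable because `g'` is continuous and `t ^ (α - 1)` is integrable on
`[0, 1]` for `α > 0`.
-/

open MeasureTheory Set

def IsPosHomogeneous {E : Type*} [AddCommGroup E] [Module ℝ E] (h : E → ℝ) (α : ℝ) : Prop :=
  ∀ t : ℝ, 0 < t → ∀ x, h (t • x) = t ^ α * h x

theorem IsPosHomogeneous.fderiv_smul {E : Type*} [NormedAddCommGroup E] [NormedSpace ℝ E]
    {h : E → ℝ} {α t : ℝ} {x : E}
    (hh : IsPosHomogeneous h α) (ht : 0 < t) (hx : DifferentiableAt ℝ h x) :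
    fderiv ℝ h (t • x) = t ^ (α - 1) • fderiv ℝ h x := by
  have hscale : ∀ y, h y = t ^ α * h (t⁻¹ • y) := fun y => by
    rw [← hh t ht, smul_inv_smul₀ ht.ne']
  have hx' : DifferentiableAt ℝ h (t⁻¹ • t • x) := by rwa [inv_smul_smul₀ ht.ne']
  have hderiv := ((hx'.hasFDerivAt.comp (t • x)
    ((t⁻¹ • ContinuousLinearMap.id ℝ E).hasFDerivAt)).const_mul (t ^ α)).congr_of_eventuallyEq
    (.of_forall hscale)
  rw [hderiv.fderiv, inv_smul_smul₀ ht.ne', Real.rpow_sub_one ht.ne', div_eq_mul_inv, mul_smul]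
  congr 1
  ext v
  simp

section Gradient

variable {F : Type*} [NormedAddCommGroup F] [InnerProductSpace ℝ F] [CompleteSpace F]

theorem gradient_comp {g : ℝ → ℝ} {h : F → ℝ} {x : F}
    (hg : DifferentiableAt ℝ g (h x)) (hh : DifferentiableAt ℝ h x) :
    gradient (g ∘ h) x = deriv g (h x) • gradient h x := by
  rw [gradient, (hg.hasDerivAt.comp_hasFDerivAt x hh.hasFDerivAt).fderiv, map_smul, gradient]

theorem IsPosHomogeneous.gradient_smul {h : F → ℝ} {α t : ℝ} {x : F}
    (hh : IsPosHomogeneous h α) (ht : 0 < t) (hx : DifferentiableAt ℝ h x) :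
    gradient h (t • x) = t ^ (α - 1) • gradient h x := by
  rw [gradient, hh.fderiv_smul ht hx, map_smul, gradient]

end Gradient

theorem integral_deriv_comp_rpow_mul {g : ℝ → ℝ} (hg : ContDiff ℝ 1 g) {α a b : ℝ}
    (hα : 0 < α) (ha : a ≠ 0) (hb : 0 ≤ b) :
    ∫ t in (0:ℝ)..b, deriv g (t ^ α * a) * t ^ (α - 1) = (g (b ^ α * a) - g 0) / (α * a) := by
  have hgd : Differentiable ℝ g := hg.differentiable one_ne_zero
  have hpow : Continuous fun t : ℝ => t ^ α * a :=
    (Real.continuous_rpow_const hα.le).mul continuous_const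
  have hint : IntervalIntegrable (fun t => deriv g (t ^ α * a) * t ^ (α - 1)) volume 0 b :=
    (intervalIntegral.intervalIntegrable_rpow' (by linarith)).continuousOn_mul
      (hg.continuous_deriv le_rfl |>.comp hpow).continuousOn
  have hftc : ∫ t in (0:ℝ)..b, α * a * (deriv g (t ^ α * a) * t ^ (α - 1))
      = g (b ^ α * a) - g 0 := by
    rw [intervalIntegral.integral_eq_sub_of_hasDerivAt_of_le hb
      (hgd.continuous.comp hpow).continuousOn (fun t ht => ?_) (hint.const_mul _)]
    · simp [Real.zero_rpow hα.ne']
    · exact ((hgd _).hasDerivAt.comp t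
        ((Real.hasDerivAt_rpow_const (Or.inl ht.1.ne')).mul_const a)).congr_deriv (by ring)
  rw [intervalIntegral.integral_const_mul] at hftc
  rw [← hftc, mul_div_cancel_left₀ _ (mul_ne_zero hα.ne' ha)]

theorem adjoint_of_composition_general {p : ℕ} (g : ℝ → ℝ) (h : EuclideanSpace ℝ (Fin p) → ℝ)
    (α : ℝ) (hg : ContDiff ℝ 1 g) (hh : Differentiable ℝ h) (hα : 0 < α)
    (hhom : ∀ t : ℝ, 0 < t → ∀ θ, h (t • θ) = t ^ α * h θ)
    (θ : EuclideanSpace ℝ (Fin p)) (hθ : h θ ≠ 0) :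
    ∫ t in (0:ℝ)..1, gradient (g ∘ h) (t • θ)
      = ((g (h θ) - g 0) / (α * h θ)) • gradient h θ := by
  have hgrad : ∀ t ∈ Ioc (0:ℝ) 1, gradient (g ∘ h) (t • θ)
      = (deriv g (t ^ α * h θ) * t ^ (α - 1)) • gradient h θ := fun t ht => by
    rw [gradient_comp (hg.differentiable one_ne_zero _) (hh _),
      IsPosHomogeneous.gradient_smul hhom ht.1 (hh θ), hhom t ht.1, smul_smul]
  calc ∫ t in (0:ℝ)..1, gradient (g ∘ h) (t • θ)
      = ∫ t in (0:ℝ)..1, (deriv g (t ^ α * h θ) * t ^ (α - 1)) • gradient h θ :=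
        intervalIntegral.integral_congr_ae (.of_forall fun t ht => hgrad t (by simpa using ht))
    _ = ((g (h θ) - g 0) / (α * h θ)) • gradient h θ := by
        rw [intervalIntegral.integral_smul_const,
          integral_deriv_comp_rpow_mul hg hα hθ zero_le_one, Real.one_rpow, one_mul]

theorem adjoint_of_composition {p : ℕ} (g : ℝ → ℝ) (h : EuclideanSpace ℝ (Fin p) → ℝ)
    (α : ℝ) (hg : ContDiff ℝ 1 g) (hh : Differentiable ℝ h) (hα : 0 < α)
    (hhom : ∀ t : ℝ, 0 < t → ∀ θ, h (t • θ) = t ^ α * h θ)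
    (θ : EuclideanSpace ℝ (Fin p)) (hθ : h θ ≠ 0)
    (hint : IntervalIntegrable (fun t : ℝ => gradient (g ∘ h) (t • θ))
      MeasureTheory.volume 0 1) :
    ∫ t in (0:ℝ)..1, gradient (g ∘ h) (t • θ)
      = ((g (h θ) - g 0) / (α * h θ)) • gradient h θ :=
  adjoint_of_composition_general g h α hg hh hα hhom θ hθ
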